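/- Let v₁,…,v_m be positive integers with v₁ + ⋯ + v_m = r, and let W = {p ∈ F_{2,2r} : p = Σ_{k=1}^s ℓ_{k,1}^{2v₁} ⋯ ℓ_{k,m}^{2v_m} for some s ∈ ℕ and real linear binary forms ℓ_{k,i}}. Then W = P_{2,2r} if and only if m = r (equivalently, every v_i = 1). In particular: every psd binary form of degree 2r is a finite sum of products ℓ₁²⋯ℓ_r² of squares of r real linear forms; and if m < r, then the psd form Π_{j=1}^r (x − jy)² does not belong to W. -/

import Mathlib

open MvPolynomial Filter

/-- Composition of a form with a matrix: `(p ∘ M)(x) = p (M x)`. -/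
noncomputable def compMat {n : ℕ} (p : MvPolynomial (Fin n) ℝ)
    (M : Matrix (Fin n) (Fin n) ℝ) : MvPolynomial (Fin n) ℝ :=
  aeval (fun j => ∑ k, MvPolynomial.C (M j k) * X k) p

/-- Coefficientwise convergence of a sequence of polynomials. -/
def CoeffTendsto {n : ℕ} (f : ℕ → MvPolynomial (Fin n) ℝ)
    (q : MvPolynomial (Fin n) ℝ) : Prop :=
  ∀ i : Fin n →₀ ℕ, Tendsto (fun m => (f m).coeff i) atTop (nhds (q.coeff i))

/-- A blender: a closed convex cone of degree-`d` forms closed under linear changes of variables. -/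
def IsBlender (n d : ℕ) (B : Set (MvPolynomial (Fin n) ℝ)) : Prop :=
  (∀ p ∈ B, p.IsHomogeneous d) ∧
  (0 ∈ B) ∧
  (∀ p ∈ B, ∀ q ∈ B, p + q ∈ B) ∧
  (∀ (f : ℕ → MvPolynomial (Fin n) ℝ) (q : MvPolynomial (Fin n) ℝ),
      (∀ m, f m ∈ B) → CoeffTendsto f q → q ∈ B) ∧
  (∀ p ∈ B, ∀ M : Matrix (Fin n) (Fin n) ℝ, compMat p M ∈ B)

/-- The inner product `[p,q] = Σ_i c(i) a(p;i) a(q;i)`, where the coefficient of `x^i`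
is `c(i) a(p;i)` and `c(i)` is the multinomial coefficient. -/
noncomputable def formInner {n : ℕ} (p q : MvPolynomial (Fin n) ℝ) : ℝ :=
  ∑ i ∈ p.support ∪ q.support,
    p.coeff i * q.coeff i / (Nat.multinomial Finset.univ (fun j => i j) : ℝ)

/-- The cone of psd forms of degree `d`. -/
def Psd (n d : ℕ) : Set (MvPolynomial (Fin n) ℝ) :=
  {p | p.IsHomogeneous d ∧ ∀ u : Fin n → ℝ, 0 ≤ eval u p}

/-- The linear form with coefficients `a`. -/
noncomputable def linForm {n : ℕ} (a : Fin n → ℝ) : MvPolynomial (Fin n) ℝ :=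
  ∑ j, MvPolynomial.C (a j) * X j

/-- The cone `Q_{n,d}` of sums of `d`-th powers of real linear forms. -/
def SumPow (n d : ℕ) : Set (MvPolynomial (Fin n) ℝ) :=
  {p | ∃ (s : ℕ) (a : Fin s → Fin n → ℝ), p = ∑ k, (linForm (a k)) ^ d}

/-- The cone of finite sums of products `ℓ₁^{2v₁} ⋯ ℓ_m^{2v_m}` of even powers of real
linear binary forms. -/
def WaringProdCone (m : ℕ) (v : Fin m → ℕ) : Set (MvPolynomial (Fin 2) ℝ) :=
  {p | ∃ (s : ℕ) (a : Fin s → Fin m → Fin 2 → ℝ),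
    p = ∑ k, ∏ i, (linForm (a k i)) ^ (2 * v i)}

/-!
A nonnegative real polynomial of positive degree has a root `z ∈ ℂ`; since it is nonnegative, a
real root is at least double, so in either case it is divisible by `(x - Re z)² + (Im z)²`, a sum
of two squares of affine polynomials, with a nonnegative quotient. By induction on the degree,
every nonnegative polynomial of degree at most `2m` is a nonnegative combination of products of
`m` squares of affine polynomials; dehomogenizing a psd binary form and homogenizing such a
representation shows that every psd form of degree `2m` is a sum of products `ℓ₁² ⋯ ℓ_m²`.

Conversely, if `m < r` and `∏_j (x - t_j y)²` is a sum of terms `∏_i ℓ_i^{2v_i}`, every term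
vanishes at the `r` points `(t_j, 1)`. A term has only `m` linear factors, so one of them vanishes
at two independent points, hence is zero; so every term is zero, which is absurd.
-/

namespace Polynomial

def affineSqProducts (n : ℕ) : Set ℝ[X] :=
  {f | ∃ a b : Fin n → ℝ, f = ∏ i, (C (a i) * X + C (b i)) ^ 2}

lemma sq_mul_mem_affineSqProducts {n : ℕ} {f : ℝ[X]} (α β : ℝ)
    (hf : f ∈ affineSqProducts n) :
    (C α * X + C β) ^ 2 * f ∈ affineSqProducts (n + 1) := by
  obtain ⟨a, b, rfl⟩ := hf
  exact ⟨Fin.cons α a, Fin.cons β b, by simp [Fin.prod_univ_succ]⟩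

lemma affineSqProducts_subset_succ (n : ℕ) : affineSqProducts n ⊆ affineSqProducts (n + 1) :=
  fun f hf => by simpa using sq_mul_mem_affineSqProducts 0 1 hf

lemma sq_mul_mem_hull_affineSqProducts {n : ℕ} {f : ℝ[X]} (α β : ℝ)
    (hf : f ∈ PointedCone.hull ℝ (affineSqProducts n)) :
    (C α * X + C β) ^ 2 * f ∈ PointedCone.hull ℝ (affineSqProducts (n + 1)) := by
  induction hf using Submodule.span_induction with
  | mem g hg => exact PointedCone.subset_hull (sq_mul_mem_affineSqProducts α β hg)
  | zero => simp
  | add g h _ _ hg hh => simpa [mul_add] using add_mem hg hh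
  | smul c g _ hg => simpa [mul_smul_comm] using Submodule.smul_mem _ c hg

lemma C_mem_hull_affineSqProducts_zero {c : ℝ} (hc : 0 ≤ c) :
    C c ∈ PointedCone.hull ℝ (affineSqProducts 0) := by
  have h1 : (1 : ℝ[X]) ∈ affineSqProducts 0 := ⟨0, 0, by simp⟩
  simpa [smul_eq_C_mul] using
    Submodule.smul_mem _ (⟨c, hc⟩ : {c : ℝ // 0 ≤ c}) (PointedCone.subset_hull h1)

lemma sq_X_sub_C_dvd_of_nonneg_of_isRoot {f : ℝ[X]} (hf : ∀ x, 0 ≤ f.eval x) {t : ℝ}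
    (ht : f.IsRoot t) : (X - C t) ^ 2 ∣ f := by
  rcases eq_or_ne f 0 with rfl | hf0
  · simp
  have hmin : IsLocalMin (fun x => f.eval x) t :=
    Eventually.of_forall fun x => by simpa [ht.eq_zero] using hf x
  have hderiv : f.derivative.IsRoot t := by
    simpa [Polynomial.deriv] using hmin.deriv_eq_zero
  exact (le_rootMultiplicity_iff hf0).mp
    ((one_lt_rootMultiplicity_iff_isRoot hf0).mpr ⟨ht, hderiv⟩)

lemma eval_nonneg_of_forall_ne {f : ℝ[X]} {t : ℝ} (hf : ∀ x ≠ t, 0 ≤ f.eval x) (x : ℝ) :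
    0 ≤ f.eval x := by
  have hclosed : IsClosed {x | 0 ≤ f.eval x} := isClosed_le continuous_const f.continuous
  have : closure {t}ᶜ ⊆ {x | 0 ≤ f.eval x} := hclosed.closure_subset_iff.mpr hf
  exact this (by simp)

lemma exists_sq_add_sq_dvd_of_nonneg {f : ℝ[X]} (hf : ∀ x, 0 ≤ f.eval x)
    (hdeg : 0 < f.degree) : ∃ a b : ℝ, (X - C a) ^ 2 + C b ^ 2 ∣ f := by
  obtain ⟨z, hz⟩ := IsAlgClosed.exists_aeval_eq_zero ℂ f hdeg.ne'
  by_cases him : z.im = 0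
  · refine ⟨z.re, 0, ?_⟩
    have hroot : f.IsRoot z.re := by
      have : z = algebraMap ℝ ℂ z.re := Complex.ext rfl (by simp [him])
      rw [this, aeval_algebraMap_apply] at hz
      simpa using hz
    simpa using sq_X_sub_C_dvd_of_nonneg_of_isRoot hf hroot
  · refine ⟨z.re, z.im, ?_⟩
    convert f.quadratic_dvd_of_aeval_eq_zero_im_ne_zero hz him using 1
    rw [← Complex.normSq_eq_norm_sq, Complex.normSq_apply]
    simp only [map_add, map_mul, map_ofNat]
    ring

lemma eval_nonneg_of_sq_add_sq_mul {h : ℝ[X]} {a b : ℝ}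
    (hnonneg : ∀ x, 0 ≤ (((X - C a) ^ 2 + C b ^ 2) * h).eval x) (x : ℝ) : 0 ≤ h.eval x := by
  refine eval_nonneg_of_forall_ne (t := a) (fun y hy => ?_) x
  have hq : 0 < ((X - C a) ^ 2 + C b ^ 2).eval y := by
    have : y - a ≠ 0 := sub_ne_zero.mpr hy
    simp only [eval_add, eval_pow, eval_sub, eval_X, eval_C]
    positivity
  exact nonneg_of_mul_nonneg_right (by simpa using hnonneg y) hq

lemma natDegree_sq_add_sq (a b : ℝ) : ((X - C a) ^ 2 + C b ^ 2).natDegree = 2 := by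
  rw [← C_pow, natDegree_add_C, natDegree_pow, natDegree_X_sub_C]

theorem mem_hull_affineSqProducts_of_nonneg (n : ℕ) {f : ℝ[X]} (hdeg : f.natDegree ≤ 2 * n)
    (hf : ∀ x, 0 ≤ f.eval x) : f ∈ PointedCone.hull ℝ (affineSqProducts n) := by
  induction n generalizing f with
  | zero =>
    rw [eq_C_of_natDegree_eq_zero (p := f) (by omega), coeff_zero_eq_eval_zero]
    exact C_mem_hull_affineSqProducts_zero (hf 0)
  | succ n ih =>
    by_cases hle : f.natDegree ≤ 2 * n
    · exact Submodule.span_mono (affineSqProducts_subset_succ n) (ih hle hf)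
    obtain ⟨a, b, h, rfl⟩ := exists_sq_add_sq_dvd_of_nonneg hf
      (natDegree_pos_iff_degree_pos.mp (by omega))
    have hh0 : h ≠ 0 := by rintro rfl; simp at hle
    have hq0 : (X - C a) ^ 2 + C b ^ 2 ≠ 0 :=
      ne_zero_of_natDegree_gt (n := 0) (by simp [natDegree_sq_add_sq])
    have hh : h ∈ PointedCone.hull ℝ (affineSqProducts n) := by
      refine ih ?_ (eval_nonneg_of_sq_add_sq_mul hf)
      rw [natDegree_mul hq0 hh0, natDegree_sq_add_sq] at hdeg
      omega
    have hsplit : ((X - C a) ^ 2 + C b ^ 2) * h =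
        (C 1 * X + C (-a)) ^ 2 * h + (C 0 * X + C b) ^ 2 * h := by
      simp only [map_one, map_neg, map_zero]
      ring
    rw [hsplit]
    exact add_mem (sq_mul_mem_hull_affineSqProducts _ _ hh)
      (sq_mul_mem_hull_affineSqProducts _ _ hh)

theorem exists_sum_prod_sq_of_mem_hull {n : ℕ} (hn : n ≠ 0) {f : ℝ[X]}
    (hf : f ∈ PointedCone.hull ℝ (affineSqProducts n)) :
    ∃ (s : ℕ) (a b : Fin s → Fin n → ℝ),
      f = ∑ k, ∏ i, (C (a k i) * X + C (b k i)) ^ 2 := by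
  obtain ⟨n, rfl⟩ := Nat.exists_eq_succ_of_ne_zero hn
  obtain ⟨s, c, g, rfl⟩ := Submodule.mem_span_set'.mp hf
  choose a b hab using fun k => (g k).2
  -- the coefficient `c k ≥ 0` is absorbed into the first factor as `√(c k)`
  refine ⟨s, fun k => Fin.cons (√(c k) * a k 0) (Fin.tail (a k)),
    fun k => Fin.cons (√(c k) * b k 0) (Fin.tail (b k)), Finset.sum_congr rfl fun k _ => ?_⟩
  rw [hab k, Fin.prod_univ_succ, Fin.prod_univ_succ]
  simp only [Fin.cons_zero, Fin.cons_succ, Fin.tail]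
  have hc : C (c k : ℝ) = C √(c k) ^ 2 := by rw [← C_pow, Real.sq_sqrt (c k).2]
  rw [show c k • _ = C (c k : ℝ) * _ from smul_eq_C_mul _, hc]
  simp only [map_mul]
  ring

end Polynomial

namespace MvPolynomial

lemma natDegree_aeval_le_totalDegree {σ R : Type*} [CommSemiring R] {g : σ → Polynomial R}
    (hg : ∀ i, (g i).natDegree ≤ 1) (p : MvPolynomial σ R) :
    (aeval g p).natDegree ≤ p.totalDegree := by
  conv_lhs => rw [p.as_sum]
  rw [map_sum]
  refine Polynomial.natDegree_sum_le_of_forall_le _ _ fun s hs => ?_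
  rw [aeval_monomial, Polynomial.algebraMap_eq]
  refine (Polynomial.natDegree_C_mul_le _ _).trans ?_
  refine (Polynomial.natDegree_prod_le _ _).trans ?_
  refine le_trans ?_ (le_totalDegree hs)
  exact Finset.sum_le_sum fun i _ => Polynomial.natDegree_pow_le_of_le _ (hg i) |>.trans (by simp)

lemma eval_aeval_X_one {R : Type*} [CommSemiring R] (p : MvPolynomial (Fin 2) R) (t : R) :
    (aeval ![Polynomial.X, 1] p).eval t = eval ![t, 1] p := by
  have hpt : (fun i => Polynomial.aeval t (![(Polynomial.X : Polynomial R), 1] i)) = ![t, 1] := by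
    funext i
    fin_cases i <;> simp
  rw [← Polynomial.coe_aeval_eq_eval, ← AlgHom.comp_apply, comp_aeval, hpt]
  rfl

lemma eq_of_aeval_X_one_eq {R : Type*} [CommSemiring R] {n : ℕ} {p q : MvPolynomial (Fin 2) R}
    (hp : p.IsHomogeneous n) (hq : q.IsHomogeneous n)
    (h : aeval ![(Polynomial.X : Polynomial R), 1] p = aeval ![Polynomial.X, 1] q) : p = q :=
  (Polynomial.homogenize_eq_of_isHomogeneous hp h).symm.trans
    (Polynomial.homogenize_eq_of_isHomogeneous hq rfl)

end MvPolynomial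

lemma isHomogeneous_linForm {n : ℕ} (a : Fin n → ℝ) : (linForm a).IsHomogeneous 1 :=
  IsHomogeneous.sum _ _ _ fun _ _ => isHomogeneous_C_mul_X _ _

lemma eval_linForm {n : ℕ} (a u : Fin n → ℝ) : eval u (linForm a) = ∑ j, a j * u j := by
  simp [linForm]

lemma aeval_X_one_linForm (a : Fin 2 → ℝ) :
    aeval ![Polynomial.X, 1] (linForm a) =
      Polynomial.C (a 0) * Polynomial.X + Polynomial.C (a 1) := by
  simp [linForm, Fin.sum_univ_two, Polynomial.algebraMap_eq]

lemma isHomogeneous_prod_linForm_pow {n m : ℕ} (a : Fin m → Fin n → ℝ) (v : Fin m → ℕ) :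
    (∏ i, linForm (a i) ^ (2 * v i)).IsHomogeneous (2 * ∑ i, v i) := by
  rw [Finset.mul_sum]
  exact IsHomogeneous.prod _ _ _ fun i _ => by simpa using (isHomogeneous_linForm (a i)).pow _

lemma eval_prod_linForm_pow_nonneg {n m : ℕ} (a : Fin m → Fin n → ℝ) (v : Fin m → ℕ)
    (u : Fin n → ℝ) : 0 ≤ eval u (∏ i, linForm (a i) ^ (2 * v i)) := by
  simp only [map_prod, map_pow]
  exact Finset.prod_nonneg fun i _ => (even_two_mul (v i)).pow_nonneg _

theorem waringProdCone_subset_psd (m : ℕ) (v : Fin m → ℕ) :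
    WaringProdCone m v ⊆ Psd 2 (2 * ∑ i, v i) := by
  rintro p ⟨s, a, rfl⟩
  exact ⟨IsHomogeneous.sum _ _ _ fun k _ => isHomogeneous_prod_linForm_pow (a k) v,
    fun u => by
      rw [map_sum]
      exact Finset.sum_nonneg fun k _ => eval_prod_linForm_pow_nonneg _ _ _⟩

theorem psd_subset_waringProdCone_one {m : ℕ} (hm : m ≠ 0) :
    Psd 2 (2 * m) ⊆ WaringProdCone m (fun _ => 1) := by
  rintro p ⟨hp, hpsd⟩
  have hdeg : (aeval ![Polynomial.X, 1] p).natDegree ≤ 2 * m :=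
    (natDegree_aeval_le_totalDegree (fun i => by fin_cases i <;> simp) p).trans hp.totalDegree_le
  have hnonneg (t : ℝ) : 0 ≤ (aeval ![Polynomial.X, 1] p).eval t := by
    rw [eval_aeval_X_one]
    exact hpsd _
  obtain ⟨s, a, b, hab⟩ := Polynomial.exists_sum_prod_sq_of_mem_hull hm
    (Polynomial.mem_hull_affineSqProducts_of_nonneg m hdeg hnonneg)
  refine ⟨s, fun k i => ![a k i, b k i], eq_of_aeval_X_one_eq hp ?_ ?_⟩
  · simpa using IsHomogeneous.sum _ _ _ fun k _ =>
      isHomogeneous_prod_linForm_pow (fun i => ![a k i, b k i]) (fun _ => 1)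
  · simp [hab, aeval_X_one_linForm]

lemma linForm_eq_zero_of_eval_eq_zero {a : Fin 2 → ℝ} {s t : ℝ} (hst : s ≠ t)
    (hs : eval ![s, 1] (linForm a) = 0) (ht : eval ![t, 1] (linForm a) = 0) : linForm a = 0 := by
  simp only [eval_linForm, Fin.sum_univ_two] at hs ht
  have ha0 : a 0 = 0 := by
    have : a 0 * (s - t) = 0 := by
      simp only [Matrix.cons_val_zero, Matrix.cons_val_one, mul_one] at hs ht
      linarith
    simpa [sub_ne_zero.mpr hst] using this
  have ha1 : a 1 = 0 := by simpa [ha0] using hs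
  simp [linForm, Fin.sum_univ_two, ha0, ha1]

lemma X_zero_sub_C_mul_X_one_ne_zero (t : ℝ) :
    (X 0 - C t * X 1 : MvPolynomial (Fin 2) ℝ) ≠ 0 :=
  fun h => by simpa using congrArg (eval ![1, 0]) h

theorem prod_sq_not_mem_waringProdCone {m r : ℕ} {v : Fin m → ℕ} (hv : ∀ i, 0 < v i)
    (hmr : m < r) {t : Fin r → ℝ} (ht : Function.Injective t) :
    (∏ j, (X 0 - C (t j) * X 1) ^ 2) ∉ WaringProdCone m v := by
  rintro ⟨s, a, hP⟩
  have hne : (∏ j, (X 0 - C (t j) * X 1) ^ 2 : MvPolynomial (Fin 2) ℝ) ≠ 0 :=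
    Finset.prod_ne_zero_iff.mpr fun j _ => pow_ne_zero 2 (X_zero_sub_C_mul_X_one_ne_zero (t j))
  apply hne
  rw [hP]
  refine Finset.sum_eq_zero fun k _ => ?_
  have hvanish (j : Fin r) : ∃ i, eval ![t j, 1] (linForm (a k i)) = 0 := by
    have hP0 : eval ![t j, 1] (∏ j, (X 0 - C (t j) * X 1) ^ 2) = 0 := by
      simp [map_prod, Finset.prod_eq_zero (Finset.mem_univ j)]
    rw [hP, map_sum,
      Finset.sum_eq_zero_iff_of_nonneg fun k _ => eval_prod_linForm_pow_nonneg _ _ _] at hP0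
    obtain ⟨i, -, hi⟩ := Finset.prod_eq_zero_iff.mp (by simpa using hP0 k (Finset.mem_univ k))
    exact ⟨i, pow_eq_zero_iff (by have := hv i; omega) |>.mp hi⟩
  choose g hg using hvanish
  obtain ⟨j, j', hjj', hgj⟩ := Fintype.exists_ne_map_eq_of_card_lt g (by simpa using hmr)
  have hzero : linForm (a k (g j)) = 0 :=
    linForm_eq_zero_of_eval_eq_zero (ht.ne hjj') (hg j) (hgj ▸ hg j')
  refine Finset.prod_eq_zero (Finset.mem_univ (g j)) ?_
  rw [hzero]
  exact zero_pow (by have := hv (g j); omega)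

lemma linForm_one_neg (t : ℝ) : linForm ![1, -t] = X 0 - C t * X 1 := by
  simp [linForm, Fin.sum_univ_two, sub_eq_add_neg]

lemma prod_sq_mem_psd {r : ℕ} (t : Fin r → ℝ) :
    (∏ j, (X 0 - C (t j) * X 1) ^ 2) ∈ Psd 2 (2 * r) := by
  have hmem : (∏ j, (X 0 - C (t j) * X 1) ^ 2) ∈ WaringProdCone r (fun _ => 1) :=
    ⟨1, fun _ j => ![1, -t j], by simp [linForm_one_neg]⟩
  simpa using waringProdCone_subset_psd r _ hmem

/-- For binary forms, the cone of sums of products of even powers of linear forms with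
exponent pattern `(2v₁,…,2v_m)`, `v₁+⋯+v_m = r`, equals `P_{2,2r}` iff `m = r`
(equivalently, each `v_i = 1`); and if `m < r` then `Π_{j=1}^r (x − j y)²` is not in the
cone. -/
theorem waringProdCone_eq_psd_iff (m r : ℕ) (hr : 0 < r) (v : Fin m → ℕ)
    (hv : ∀ i, 0 < v i) (hsum : ∑ i, v i = r) :
    (WaringProdCone m v = Psd 2 (2 * r) ↔ m = r) ∧
    (m = r ↔ ∀ i, v i = 1) ∧
    (m < r →
      (∏ j : Fin r, (X 0 - MvPolynomial.C ((j : ℕ) + 1 : ℝ) * X 1) ^ 2) ∉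
        WaringProdCone m v) := by
  have hm_le : m ≤ r := by
    simpa [hsum] using Finset.card_nsmul_le_sum Finset.univ v 1 fun i _ => hv i
  have hm_eq : m = r ↔ ∀ i, v i = 1 := by
    have h := Finset.sum_eq_sum_iff_of_le (s := Finset.univ) (f := fun _ => 1) (g := v)
      fun i _ => hv i
    simp only [Finset.sum_const, Finset.card_univ, Fintype.card_fin, smul_eq_mul, mul_one, hsum,
      Finset.mem_univ, forall_const] at h
    simpa [eq_comm] using h
  have hnot_mem (hmr : m < r) := prod_sq_not_mem_waringProdCone hv hmr
    (t := fun j : Fin r => ((j : ℕ) + 1 : ℝ)) fun i j h => by simpa [Fin.ext_iff] using h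
  refine ⟨⟨fun hW => ?_, fun hmr => ?_⟩, hm_eq, hnot_mem⟩
  · by_contra hne
    exact hnot_mem (hm_le.lt_of_ne hne) (hW ▸ prod_sq_mem_psd _)
  · subst hmr
    refine (hsum ▸ waringProdCone_subset_psd m v).antisymm ?_
    rw [funext (hm_eq.mp rfl)]
    exact psd_subset_waringProdCone_one hr.ne'
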